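/- arXiv:0905.0201 — 2 statements merged into one kernel-verified Lean document; each statement's English description precedes it below -/
import Mathlib

section
/- Additivity of E_Hmin: for multipartite pure states |ψ_1⟩ and |ψ_2⟩ (on disjoint collections of subsystems), E_Hmin(|ψ_1⟩ ⊗ |ψ_2⟩) = E_Hmin(|ψ_1⟩) + E_Hmin(|ψ_2⟩). -/
open scoped BigOperators

/-- Shannon entropy of a finite family of reals (with the convention `0 log 0 = 0`). -/
noncomputable def Hsh {ι : Type*} [Fintype ι] (p : ι → ℝ) : ℝ :=
  ∑ i, Real.negMulLog (p i)

/-- Measurement entropy of a multipartite pure state: Shannon entropy of the squared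
moduli of the computational-basis amplitudes. -/
noncomputable def Hmeas {ι : Type*} [Fintype ι] [DecidableEq ι] {d : ι → ℕ}
    (ψ : (∀ k, Fin (d k)) → ℂ) : ℝ :=
  ∑ i, Real.negMulLog (‖ψ i‖ ^ 2)

/-- Application of a local (one-subsystem-wise) linear transformation
`U_1 ⊗ ... ⊗ U_n` to a multipartite state. -/
noncomputable def applyLocal {ι : Type*} [Fintype ι] [DecidableEq ι] {d : ι → ℕ}
    (U : ∀ k, Matrix (Fin (d k)) (Fin (d k)) ℂ) (ψ : (∀ k, Fin (d k)) → ℂ) :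
    (∀ k, Fin (d k)) → ℂ :=
  fun i => ∑ j, (∏ k, U k (i k) (j k)) * ψ j

/-- `E_Hmin`: the minimum over local unitaries of the measurement entropy. -/
noncomputable def EHmin {ι : Type*} [Fintype ι] [DecidableEq ι] {d : ι → ℕ}
    (ψ : (∀ k, Fin (d k)) → ℂ) : ℝ :=
  ⨅ U : ∀ k, Matrix.unitaryGroup (Fin (d k)) ℂ,
    Hmeas (applyLocal (fun k => (U k : Matrix (Fin (d k)) (Fin (d k)) ℂ)) ψ)

/-! A local unitary on the subsystems `ι ⊕ κ` is exactly a pair of local unitaries, one on `ι`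
and one on `κ`, and it maps `ψ₁ ⊗ ψ₂` to the tensor product of the two transformed states. The
measurement distribution of a product state is the product of the two measurement distributions,
and the Shannon entropy of a product of probability distributions is the sum of their entropies.
Hence the minimisation over local unitaries of `ι ⊕ κ` splits into two independent
minimisations. -/

open scoped Matrix

namespace Matrix

variable {ι : Type*} [Fintype ι]

section CommSemiring

variable {R : Type*} [CommSemiring R]

def piKronecker {l m : ι → Type*} (A : ∀ k, Matrix (l k) (m k) R) :
    Matrix (∀ k, l k) (∀ k, m k) R :=
  of fun i j => ∏ k, A k (i k) (j k)

theorem piKronecker_mul [DecidableEq ι] {l m n : ι → Type*} [∀ k, Fintype (m k)]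
    (A : ∀ k, Matrix (l k) (m k) R) (B : ∀ k, Matrix (m k) (n k) R) :
    piKronecker A * piKronecker B = piKronecker fun k => A k * B k := by
  ext i j
  simp only [piKronecker, mul_apply, of_apply, ← Finset.prod_mul_distrib]
  exact (Fintype.prod_sum fun k x => A k (i k) x * B k x (j k)).symm

theorem piKronecker_one {n : ι → Type*} [∀ k, DecidableEq (n k)] :
    piKronecker (fun k => (1 : Matrix (n k) (n k) R)) = 1 := by
  ext i j
  simp only [piKronecker, of_apply, one_apply, Finset.prod_boole, Finset.mem_univ,
    forall_const, funext_iff]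

theorem conjTranspose_piKronecker [StarRing R] {l m : ι → Type*}
    (A : ∀ k, Matrix (l k) (m k) R) :
    (piKronecker A)ᴴ = piKronecker fun k => (A k)ᴴ := by
  ext i j
  simp [piKronecker, conjTranspose_apply, star_prod]

end CommSemiring

theorem piKronecker_mem_unitaryGroup [DecidableEq ι] {R : Type*} [CommRing R] [StarRing R]
    {n : ι → Type*} [∀ k, Fintype (n k)] [∀ k, DecidableEq (n k)]
    (U : ∀ k, unitaryGroup (n k) R) :
    piKronecker (fun k => (U k : Matrix (n k) (n k) R)) ∈ unitaryGroup (∀ k, n k) R := by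
  rw [mem_unitaryGroup_iff', star_eq_conjTranspose, conjTranspose_piKronecker, piKronecker_mul]
  simp_rw [← star_eq_conjTranspose, UnitaryGroup.star_mul_self, piKronecker_one]

theorem sum_norm_sq_mulVec_of_mem_unitaryGroup {n : Type*} [Fintype n] [DecidableEq n]
    {U : Matrix n n ℂ} (hU : U ∈ unitaryGroup n ℂ) (v : n → ℂ) :
    ∑ i, ‖(U *ᵥ v) i‖ ^ 2 = ∑ i, ‖v i‖ ^ 2 := by
  have sum_norm_sq (w : n → ℂ) : ((∑ i, ‖w i‖ ^ 2 : ℝ) : ℂ) = star w ⬝ᵥ w := by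
    simp [dotProduct, Complex.conj_mul']
  have hdot : star (U *ᵥ v) ⬝ᵥ (U *ᵥ v) = star v ⬝ᵥ v := by
    rw [star_mulVec, ← dotProduct_mulVec, mulVec_mulVec, ← star_eq_conjTranspose,
      mem_unitaryGroup_iff'.mp hU, one_mulVec]
  exact_mod_cast (sum_norm_sq _).trans (hdot.trans (sum_norm_sq v).symm)

end Matrix

theorem Fintype.sum_sumPi {ι κ M : Type*} [Fintype ι] [Fintype κ] [DecidableEq ι]
    [DecidableEq κ] [AddCommMonoid M] {β : ι ⊕ κ → Type*} [∀ k, Fintype (β k)]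
    (f : (∀ k, β k) → M) :
    ∑ i, f i = ∑ x : ∀ a, β (.inl a), ∑ y : ∀ b, β (.inr b), f (Sum.rec x y) := by
  rw [← (Equiv.sumPiEquivProdPi β).symm.sum_comp, Fintype.sum_prod_type]
  rfl

section Entropy

variable {α β : Type*} [Fintype α] [Fintype β]

theorem Hsh_nonneg {p : α → ℝ} (hp0 : ∀ a, 0 ≤ p a) (hp1 : ∑ a, p a = 1) : 0 ≤ Hsh p :=
  Finset.sum_nonneg fun a _ => Real.negMulLog_nonneg (hp0 a) <|
    hp1 ▸ Finset.single_le_sum (fun b _ => hp0 b) (Finset.mem_univ a)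

theorem Hsh_mul {p : α → ℝ} {q : β → ℝ} (hp : ∑ a, p a = 1) (hq : ∑ b, q b = 1) :
    Hsh (fun x : α × β => p x.1 * q x.2) = Hsh p + Hsh q := by
  simp only [Hsh, Real.negMulLog_mul, Fintype.sum_prod_type, Finset.sum_add_distrib,
    ← Finset.sum_mul, ← Finset.mul_sum, hp, hq, one_mul]

end Entropy

section States

variable {ι κ : Type*} [Fintype ι] [Fintype κ] [DecidableEq ι] [DecidableEq κ]
  {d d1 : ι → ℕ} {d2 : κ → ℕ}

theorem applyLocal_eq_piKronecker_mulVec (V : ∀ k, Matrix (Fin (d k)) (Fin (d k)) ℂ)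
    (ψ : (∀ k, Fin (d k)) → ℂ) : applyLocal V ψ = Matrix.piKronecker V *ᵥ ψ :=
  rfl

theorem sum_norm_sq_applyLocal (U : ∀ k, Matrix.unitaryGroup (Fin (d k)) ℂ)
    (ψ : (∀ k, Fin (d k)) → ℂ) :
    ∑ i, ‖applyLocal (fun k => (U k : Matrix (Fin (d k)) (Fin (d k)) ℂ)) ψ i‖ ^ 2 =
      ∑ i, ‖ψ i‖ ^ 2 := by
  rw [applyLocal_eq_piKronecker_mulVec]
  exact Matrix.sum_norm_sq_mulVec_of_mem_unitaryGroup (Matrix.piKronecker_mem_unitaryGroup U) ψ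

theorem Hmeas_nonneg {ψ : (∀ k, Fin (d k)) → ℂ} (hψ : ∑ i, ‖ψ i‖ ^ 2 = 1) : 0 ≤ Hmeas ψ :=
  Hsh_nonneg (fun _ => by positivity) hψ

def tensorState (ψ1 : (∀ k, Fin (d1 k)) → ℂ) (ψ2 : (∀ k, Fin (d2 k)) → ℂ) :
    (∀ k : ι ⊕ κ, Fin (Sum.elim d1 d2 k)) → ℂ :=
  fun i => ψ1 (fun a => i (.inl a)) * ψ2 (fun b => i (.inr b))

theorem Hmeas_tensorState {ψ1 : (∀ k, Fin (d1 k)) → ℂ} {ψ2 : (∀ k, Fin (d2 k)) → ℂ}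
    (h1 : ∑ i, ‖ψ1 i‖ ^ 2 = 1) (h2 : ∑ i, ‖ψ2 i‖ ^ 2 = 1) :
    Hmeas (tensorState ψ1 ψ2) = Hmeas ψ1 + Hmeas ψ2 := by
  have hprod := Hsh_mul h1 h2
  simp only [Hsh, Fintype.sum_prod_type, ← mul_pow, ← norm_mul] at hprod
  rw [Hmeas, Fintype.sum_sumPi]
  exact hprod

theorem applyLocal_tensorState
    (W : ∀ k, Matrix (Fin (Sum.elim d1 d2 k)) (Fin (Sum.elim d1 d2 k)) ℂ)
    (ψ1 : (∀ k, Fin (d1 k)) → ℂ) (ψ2 : (∀ k, Fin (d2 k)) → ℂ) :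
    applyLocal W (tensorState ψ1 ψ2) =
      tensorState (applyLocal (fun a => W (.inl a)) ψ1) (applyLocal (fun b => W (.inr b)) ψ2) := by
  funext i
  simp only [applyLocal, tensorState, Finset.sum_mul_sum, Fintype.sum_sumPi,
    Fintype.prod_sum_type]
  refine Finset.sum_congr rfl fun x _ => Finset.sum_congr rfl fun y _ => ?_
  ring

end States

theorem ciInf_prod_add {A B : Type*} [Nonempty A] [Nonempty B] {f : A → ℝ} {g : B → ℝ}
    (hf : BddBelow (Set.range f)) (hg : BddBelow (Set.range g)) :
    ⨅ p : A × B, (f p.1 + g p.2) = (⨅ a, f a) + ⨅ b, g b := by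
  refine le_antisymm ?_ (le_ciInf fun p => add_le_add (ciInf_le hf p.1) (ciInf_le hg p.2))
  have hfg : BddBelow (Set.range fun p : A × B => f p.1 + g p.2) := by
    obtain ⟨a₀, ha₀⟩ := hf
    obtain ⟨b₀, hb₀⟩ := hg
    exact ⟨a₀ + b₀, by rintro _ ⟨p, rfl⟩; exact add_le_add (ha₀ ⟨p.1, rfl⟩) (hb₀ ⟨p.2, rfl⟩)⟩
  exact le_ciInf_add_ciInf fun a b => ciInf_le hfg (a, b)

/-- Additivity of `E_Hmin`: for multipartite pure states `ψ₁`, `ψ₂` on disjoint collections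
of subsystems, `E_Hmin(ψ₁ ⊗ ψ₂) = E_Hmin(ψ₁) + E_Hmin(ψ₂)`. -/
theorem EHmin_additive {ι κ : Type*} [Fintype ι] [Fintype κ] [DecidableEq ι] [DecidableEq κ]
    {d1 : ι → ℕ} {d2 : κ → ℕ}
    (ψ1 : (∀ k, Fin (d1 k)) → ℂ) (ψ2 : (∀ k, Fin (d2 k)) → ℂ)
    (h1 : ∑ i, ‖ψ1 i‖ ^ 2 = 1) (h2 : ∑ i, ‖ψ2 i‖ ^ 2 = 1)
    (ψ12 : (∀ k : ι ⊕ κ, Fin (Sum.elim d1 d2 k)) → ℂ)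
    (hψ12 : ∀ i, ψ12 i = ψ1 (fun a => i (Sum.inl a)) * ψ2 (fun b => i (Sum.inr b))) :
    EHmin ψ12 = EHmin ψ1 + EHmin ψ2 := by
  obtain rfl : ψ12 = tensorState ψ1 ψ2 := funext hψ12
  set F := fun U : ∀ a, Matrix.unitaryGroup (Fin (d1 a)) ℂ =>
    Hmeas (applyLocal (fun a => (U a : Matrix (Fin (d1 a)) (Fin (d1 a)) ℂ)) ψ1)
  set G := fun U : ∀ b, Matrix.unitaryGroup (Fin (d2 b)) ℂ =>
    Hmeas (applyLocal (fun b => (U b : Matrix (Fin (d2 b)) (Fin (d2 b)) ℂ)) ψ2)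
  have hF : BddBelow (Set.range F) :=
    ⟨0, by rintro _ ⟨U, rfl⟩; exact Hmeas_nonneg ((sum_norm_sq_applyLocal U ψ1).trans h1)⟩
  have hG : BddBelow (Set.range G) :=
    ⟨0, by rintro _ ⟨U, rfl⟩; exact Hmeas_nonneg ((sum_norm_sq_applyLocal U ψ2).trans h2)⟩
  calc EHmin (tensorState ψ1 ψ2)
      = ⨅ W : ∀ k, Matrix.unitaryGroup (Fin (Sum.elim d1 d2 k)) ℂ,
          F (fun a => W (.inl a)) + G (fun b => W (.inr b)) :=
        iInf_congr fun W => by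
          rw [applyLocal_tensorState]
          exact Hmeas_tensorState ((sum_norm_sq_applyLocal (fun a => W (.inl a)) ψ1).trans h1)
            ((sum_norm_sq_applyLocal (fun b => W (.inr b)) ψ2).trans h2)
    _ = ⨅ p : _ × _, F p.1 + G p.2 := (Equiv.sumPiEquivProdPi _).iInf_congr fun _ => rfl
    _ = EHmin ψ1 + EHmin ψ2 := ciInf_prod_add hF hG
end

section
/- The Schmidt-basis representation minimizes measurement entropy: if |ψ⟩ = ∑_i √λ_i |i⟩_A ⊗ |i⟩_B is in Schmidt form, then H_meas(|ψ⟩) = H_sh(λ) ≤ H_meas((U_A ⊗ U_B)|ψ⟩) for all unitaries U_A, U_B. -/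
/-!
Write `η x = -x log x`. Since `U_B` has orthonormal columns, the `A`-marginal of the rotated
Schmidt state is `p_a = ∑ᵢ |U_A(a, i)|² λᵢ`. The weights `|U_A(a, i)|²` have unit column sums and
row sums at most `1`, so concavity of `η` together with `η 0 = 0` gives
`∑ᵢ η λᵢ ≤ ∑ₐ η pₐ`. Finally `η` is subadditive on `[0, ∞)`, so the entropy of the joint
distribution dominates that of its marginal.
-/

open scoped BigOperators

/-- Application of `U_A ⊗ U_B` to a bipartite state. -/
noncomputable def apply2 {dA dB : ℕ} (UA : Matrix (Fin dA) (Fin dA) ℂ)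
    (UB : Matrix (Fin dB) (Fin dB) ℂ) (ψ : Fin dA × Fin dB → ℂ) :
    Fin dA × Fin dB → ℂ :=
  fun x => ∑ a, ∑ b, UA x.1 a * UB x.2 b * ψ (a, b)

/-- Measurement entropy of a bipartite pure state. -/
noncomputable def Hmeas2 {dA dB : ℕ} (ψ : Fin dA × Fin dB → ℂ) : ℝ :=
  ∑ x, Real.negMulLog (‖ψ x‖ ^ 2)

/-- `E_Hmin` for bipartite states. -/
noncomputable def EHmin2 {dA dB : ℕ} (ψ : Fin dA × Fin dB → ℂ) : ℝ :=
  ⨅ U : Matrix.unitaryGroup (Fin dA) ℂ × Matrix.unitaryGroup (Fin dB) ℂ,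
    Hmeas2 (apply2 (U.1 : Matrix (Fin dA) (Fin dA) ℂ) (U.2 : Matrix (Fin dB) (Fin dB) ℂ) ψ)

open scoped Matrix

namespace Real

theorem negMulLog_sum_le_sum_negMulLog {ι : Type*} (s : Finset ι) {x : ι → ℝ}
    (hx : ∀ i ∈ s, 0 ≤ x i) :
    negMulLog (∑ i ∈ s, x i) ≤ ∑ i ∈ s, negMulLog (x i) := by
  have hterm : ∀ i ∈ s, x i * log (x i) ≤ x i * log (∑ j ∈ s, x j) := by
    intro i hi
    rcases (hx i hi).eq_or_lt with h | h
    · simp [← h]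
    · exact mul_le_mul_of_nonneg_left (log_le_log h (Finset.single_le_sum hx hi)) h.le
  simpa only [negMulLog_eq_neg, Finset.sum_neg_distrib, Finset.sum_mul, neg_le_neg_iff]
    using Finset.sum_le_sum hterm

theorem sum_mul_negMulLog_le_negMulLog_sum {ι : Type*} (s : Finset ι) {w x : ι → ℝ}
    (hw : ∀ i ∈ s, 0 ≤ w i) (hw₁ : ∑ i ∈ s, w i ≤ 1) (hx : ∀ i ∈ s, 0 ≤ x i) :
    ∑ i ∈ s, w i * negMulLog (x i) ≤ negMulLog (∑ i ∈ s, w i * x i) := by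
  -- Jensen with the missing weight `1 - ∑ w` put on the point `0`, where `negMulLog` vanishes
  simpa using concaveOn_negMulLog.map_add_sum_le hw (v := 1 - ∑ i ∈ s, w i) (q := 0)
    (by ring) hx (sub_nonneg.2 hw₁) Set.self_mem_Ici

theorem sum_negMulLog_le_sum_negMulLog_mulVec {α ι : Type*} [Fintype α] [Fintype ι]
    {W : Matrix α ι ℝ} (hW : ∀ a i, 0 ≤ W a i) (hcol : ∀ i, ∑ a, W a i = 1)
    (hrow : ∀ a, ∑ i, W a i ≤ 1) {p : ι → ℝ} (hp : ∀ i, 0 ≤ p i) :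
    ∑ i, negMulLog (p i) ≤ ∑ a, negMulLog ((W *ᵥ p) a) :=
  calc ∑ i, negMulLog (p i) = ∑ a, ∑ i, W a i * negMulLog (p i) := by
        simp only [Finset.sum_comm (γ := α), ← Finset.sum_mul, hcol, one_mul]
    _ ≤ ∑ a, negMulLog ((W *ᵥ p) a) := Finset.sum_le_sum fun a _ =>
        sum_mul_negMulLog_le_negMulLog_sum _ (fun i _ => hW a i) (hrow a) (fun i _ => hp i)

end Real

namespace Matrix

variable {𝕜 m n : Type*} [RCLike 𝕜] [Fintype m]

theorem ofReal_sum_norm_sq_eq_star_dotProduct (y : m → 𝕜) :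
    ((∑ a, ‖y a‖ ^ 2 : ℝ) : 𝕜) = star y ⬝ᵥ y := by
  push_cast
  simp only [dotProduct, Pi.star_apply, RCLike.star_def, RCLike.conj_mul]

theorem sum_norm_sq_mulVec_of_conjTranspose_mul_self [Fintype n] [DecidableEq n]
    {V : Matrix m n 𝕜} (hV : Vᴴ * V = 1) (c : n → 𝕜) :
    ∑ a, ‖(V *ᵥ c) a‖ ^ 2 = ∑ i, ‖c i‖ ^ 2 := by
  apply_fun ((↑) : ℝ → 𝕜) using RCLike.ofReal_injective
  rw [ofReal_sum_norm_sq_eq_star_dotProduct, ofReal_sum_norm_sq_eq_star_dotProduct,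
    star_mulVec, dotProduct_mulVec, vecMul_vecMul, hV, vecMul_one]

theorem sum_norm_sq_apply_eq_one_of_conjTranspose_mul_self [DecidableEq n] {V : Matrix m n 𝕜}
    (hV : Vᴴ * V = 1) (i : n) : ∑ a, ‖V a i‖ ^ 2 = 1 := by
  have h := congr_fun₂ hV i i
  simp only [mul_apply, conjTranspose_apply, RCLike.star_def, RCLike.conj_mul, one_apply_eq] at h
  exact_mod_cast h

theorem conjTranspose_mul_self_submatrix_id [DecidableEq m] [DecidableEq n] [Fintype n]
    {U : Matrix m m 𝕜} (hU : Uᴴ * U = 1) {e : n → m} (he : Function.Injective e) :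
    (U.submatrix id e)ᴴ * U.submatrix id e = 1 := by
  rw [conjTranspose_submatrix, ← submatrix_mul _ _ _ _ _ Function.bijective_id, hU,
    submatrix_one _ he]

theorem sum_norm_sq_comp_le_one_of_mul_conjTranspose_self [Fintype n] [DecidableEq m]
    {U : Matrix m m 𝕜} (hU : U * Uᴴ = 1) {e : n → m} (he : Function.Injective e) (a : m) :
    ∑ i, ‖U a (e i)‖ ^ 2 ≤ 1 := by
  have hrow : ∑ c, ‖U a c‖ ^ 2 = 1 := by
    simpa [norm_star] using
      sum_norm_sq_apply_eq_one_of_conjTranspose_mul_self (V := Uᴴ) (by simpa using hU) a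
  calc ∑ i, ‖U a (e i)‖ ^ 2 = ∑ c ∈ Finset.univ.map ⟨e, he⟩, ‖U a c‖ ^ 2 := by
        rw [Finset.sum_map]; rfl
    _ ≤ ∑ c, ‖U a c‖ ^ 2 := Finset.sum_le_univ_sum_of_nonneg fun _ => sq_nonneg _
    _ = 1 := hrow

end Matrix

namespace Fin

theorem sum_sum_ite_val_eq {M : Type*} [AddCommMonoid M] {dA dB : ℕ}
    (f : Fin dA → Fin dB → M) :
    ∑ a : Fin dA, ∑ b : Fin dB, (if (a : ℕ) = b then f a b else 0) =
      ∑ i : Fin (min dA dB), f (castLE (min_le_left _ _) i) (castLE (min_le_right _ _) i) := by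
  rw [← Fintype.sum_prod_type', ← Finset.sum_filter]
  symm
  refine Finset.sum_bij (fun i _ => (castLE (min_le_left _ _) i, castLE (min_le_right _ _) i))
    (by simp) (fun i _ j _ h => by simpa [Fin.ext_iff] using h) ?_ (fun _ _ => rfl)
  rintro ⟨a, b⟩ hab
  simp only [Finset.mem_filter, Finset.mem_univ, true_and] at hab
  exact ⟨⟨a, lt_min a.2 (hab ▸ b.2)⟩, Finset.mem_univ _, by simp [Fin.ext_iff, hab]⟩

end Fin

theorem Hmeas2_eq_sum_sum {dA dB : ℕ} (φ : Fin dA × Fin dB → ℂ) :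
    Hmeas2 φ = ∑ a, ∑ b, Real.negMulLog (‖φ (a, b)‖ ^ 2) :=
  Fintype.sum_prod_type _

noncomputable def schmidtState (dA dB : ℕ) (lam : ℕ → ℝ) : Fin dA × Fin dB → ℂ :=
  fun x => if (x.1 : ℕ) = x.2 then (√(lam x.1) : ℂ) else 0

section Schmidt

open Matrix Real

variable {dA dB : ℕ} {lam : ℕ → ℝ}

theorem Hmeas2_schmidtState (hlam : ∀ i, 0 ≤ lam i) :
    Hmeas2 (schmidtState dA dB lam) = ∑ i : Fin (min dA dB), negMulLog (lam i) := by
  have hterm : ∀ (a : Fin dA) (b : Fin dB), negMulLog (‖schmidtState dA dB lam (a, b)‖ ^ 2) =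
      if (a : ℕ) = b then negMulLog (lam a) else 0 := by
    intro a b
    unfold schmidtState
    split_ifs <;> simp [Complex.norm_real, sq_abs, sq_sqrt (hlam _)]
  rw [Hmeas2_eq_sum_sum]
  simp only [hterm]
  rw [Fin.sum_sum_ite_val_eq]
  rfl

theorem apply2_schmidtState_apply (UA : Matrix (Fin dA) (Fin dA) ℂ)
    (UB : Matrix (Fin dB) (Fin dB) ℂ) (a : Fin dA) (b : Fin dB) :
    apply2 UA UB (schmidtState dA dB lam) (a, b) =
      (UB.submatrix id (Fin.castLE (min_le_right dA dB)) *ᵥ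
        fun i => UA a (Fin.castLE (min_le_left dA dB) i) * √(lam i)) b := by
  simp only [apply2, schmidtState, mul_ite, mul_zero]
  rw [Fin.sum_sum_ite_val_eq]
  simp only [mulVec, dotProduct, submatrix_apply, id, Fin.val_castLE]
  exact Finset.sum_congr rfl fun i _ => by ring

theorem sum_norm_sq_apply2_schmidtState (hlam : ∀ i, 0 ≤ lam i)
    (UA : Matrix (Fin dA) (Fin dA) ℂ) {UB : Matrix (Fin dB) (Fin dB) ℂ}
    (hUB : UB ∈ unitaryGroup (Fin dB) ℂ) (a : Fin dA) :
    ∑ b, ‖apply2 UA UB (schmidtState dA dB lam) (a, b)‖ ^ 2 =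
      ∑ i : Fin (min dA dB), ‖UA a (Fin.castLE (min_le_left dA dB) i)‖ ^ 2 * lam i := by
  simp only [apply2_schmidtState_apply]
  rw [sum_norm_sq_mulVec_of_conjTranspose_mul_self (conjTranspose_mul_self_submatrix_id
    (mem_unitaryGroup_iff'.1 hUB) (Fin.castLE_injective _))]
  simp [mul_pow, Complex.norm_real, sq_abs, sq_sqrt (hlam _)]

end Schmidt

theorem schmidt_minimizes_Hmeas_general (dA dB : ℕ) (lam : ℕ → ℝ) (hlam : ∀ i, 0 ≤ lam i)
    (ψ : Fin dA × Fin dB → ℂ)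
    (hψ : ∀ a b, ψ (a, b) =
      if (a : ℕ) = (b : ℕ) then ((Real.sqrt (lam a) : ℝ) : ℂ) else 0) :
    Hmeas2 ψ = ∑ i ∈ Finset.range (min dA dB), Real.negMulLog (lam i) ∧
      ∀ UA ∈ Matrix.unitaryGroup (Fin dA) ℂ, ∀ UB ∈ Matrix.unitaryGroup (Fin dB) ℂ,
        Hmeas2 ψ ≤ Hmeas2 (apply2 UA UB ψ) := by
  obtain rfl : ψ = schmidtState dA dB lam := funext fun x => hψ x.1 x.2
  have hentropy := Hmeas2_schmidtState (dA := dA) (dB := dB) hlam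
  refine ⟨hentropy.trans (Fin.sum_univ_eq_sum_range (fun i => Real.negMulLog (lam i)) _),
    fun UA hUA UB hUB => ?_⟩
  let W : Matrix (Fin dA) (Fin (min dA dB)) ℝ :=
    fun a i => ‖UA a (Fin.castLE (min_le_left dA dB) i)‖ ^ 2
  have hcol (i) : ∑ a, W a i = 1 :=
    Matrix.sum_norm_sq_apply_eq_one_of_conjTranspose_mul_self
      (Matrix.mem_unitaryGroup_iff'.1 hUA) _
  have hrow (a) : ∑ i, W a i ≤ 1 :=
    Matrix.sum_norm_sq_comp_le_one_of_mul_conjTranspose_self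
      (Matrix.mem_unitaryGroup_iff.1 hUA) (Fin.castLE_injective _) a
  calc Hmeas2 (schmidtState dA dB lam)
      = ∑ i : Fin (min dA dB), Real.negMulLog (lam i) := hentropy
    _ ≤ ∑ a, Real.negMulLog ((W *ᵥ fun i => lam i) a) :=
        Real.sum_negMulLog_le_sum_negMulLog_mulVec (fun _ _ => sq_nonneg _) hcol hrow
          fun i => hlam i
    _ = ∑ a, Real.negMulLog (∑ b, ‖apply2 UA UB (schmidtState dA dB lam) (a, b)‖ ^ 2) := by
        simp only [sum_norm_sq_apply2_schmidtState hlam UA hUB, Matrix.mulVec, dotProduct, W]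
    _ ≤ ∑ a, ∑ b, Real.negMulLog (‖apply2 UA UB (schmidtState dA dB lam) (a, b)‖ ^ 2) :=
        Finset.sum_le_sum fun a _ =>
          Real.negMulLog_sum_le_sum_negMulLog _ fun _ _ => sq_nonneg _
    _ = Hmeas2 (apply2 UA UB (schmidtState dA dB lam)) :=
        (Hmeas2_eq_sum_sum _).symm

/-- The Schmidt-basis representation minimizes measurement entropy: if
`|ψ⟩ = ∑_i √λ_i |i⟩_A ⊗ |i⟩_B` is in Schmidt form, then
`H_meas(ψ) = H_sh(λ) ≤ H_meas((U_A ⊗ U_B)ψ)` for all unitaries `U_A`, `U_B`. -/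
theorem schmidt_minimizes_Hmeas (dA dB : ℕ) (lam : ℕ → ℝ) (hlam : ∀ i, 0 ≤ lam i)
    (hsum : ∑ i ∈ Finset.range (min dA dB), lam i = 1)
    (ψ : Fin dA × Fin dB → ℂ)
    (hψ : ∀ a b, ψ (a, b) =
      if (a : ℕ) = (b : ℕ) then ((Real.sqrt (lam a) : ℝ) : ℂ) else 0) :
    Hmeas2 ψ = ∑ i ∈ Finset.range (min dA dB), Real.negMulLog (lam i) ∧
      ∀ UA ∈ Matrix.unitaryGroup (Fin dA) ℂ, ∀ UB ∈ Matrix.unitaryGroup (Fin dB) ℂ,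
        Hmeas2 ψ ≤ Hmeas2 (apply2 UA UB ψ) :=
  schmidt_minimizes_Hmeas_general dA dB lam hlam ψ hψ
end
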